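/- arXiv:1011.5215 — 2 statements merged into one kernel-verified Lean document; each statement's English description precedes it below -/
import Mathlib

section
/- The Boole–Weyl algebra BW_n, defined as the free associative Z_2-algebra on x_1,...,x_n, y_1,...,y_n modulo the relations x_i² = x_i, y_i² = 0, y_i x_i = x_i y_i + y_i + 1, x_i x_j = x_j x_i, y_i y_j = y_j y_i, and y_i x_j = x_j y_i for i ≠ j, is isomorphic as a Z_2-algebra to End_{Z_2}(M(Z_2^n, Z_2)), via sending x_i to multiplication by the i-th coordinate and y_i to the Boolean derivative ∂_i. -/
/-!
The assignment `x_i ↦ X_i`, `y_i ↦ ∂_i` respects the defining relations, so it induces an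
algebra map `BW_n → End(M)`. This map is onto: its image contains every multiplication operator
(each Boolean function is a polynomial in the coordinates) and every translation `τ_c` (since
`τ_{e_i} = ∂_i + 1`), and every operator `F` on `M` is `∑_c (g_c ·) ∘ τ_c` with
`g_c(x) = F(δ_{x+c})(x)`. On the other side, the relations let one rewrite every word in normal
order, so the monomials `x^a y^b` span `BW_n`; hence `dim BW_n ≤ 4^n = dim End(M)`, and a
surjection between spaces of these dimensions is an isomorphism.
-/

open Finset

/-- The space of all functions `Z_2^n → Z_2`. -/
abbrev V (n : ℕ) : Type := (Fin n → ZMod 2) → ZMod 2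

/-- Indicator vector of a subset of `[n]`, identifying `P[n]` with `Z_2^n`. -/
def ind {n : ℕ} (a : Finset (Fin n)) : Fin n → ZMod 2 :=
  fun i => if i ∈ a then 1 else 0

/-- `m^a`: the indicator function of the single point `a`. -/
def mFun {n : ℕ} (a : Finset (Fin n)) : V n :=
  fun b => if b = ind a then 1 else 0

/-- `x^a`: the monomial function, `x^a(b) = 1` iff `a ⊆ b`. -/
def xFun {n : ℕ} (a : Finset (Fin n)) : V n :=
  fun b => if ∀ i ∈ a, b i = 1 then 1 else 0

/-- `w^a = ∏_{i ∈ a} (x_i + 1)`: `w^a(b) = 1` iff `b ⊆ [n] \ a`. -/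
def wFun {n : ℕ} (a : Finset (Fin n)) : V n :=
  fun b => if ∀ i ∈ a, b i = 0 then 1 else 0

/-- The shift operator `s_i`, `(s_i f)(x) = f(x + e_i)`. -/
def shiftOp {n : ℕ} (i : Fin n) : Module.End (ZMod 2) (V n) where
  toFun f := fun x => f (x + Pi.single i 1)
  map_add' f g := rfl
  map_smul' c f := by funext x; rfl

/-- The Boolean partial derivative `∂_i`, `(∂_i f)(x) = f(x + e_i) + f(x)`. -/
def derivOp {n : ℕ} (i : Fin n) : Module.End (ZMod 2) (V n) where
  toFun f := fun x => f (x + Pi.single i 1) + f x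
  map_add' f g := by
    funext x
    show (f + g) _ + (f + g) _ = _
    simp only [Pi.add_apply]
    ring
  map_smul' c f := by
    funext x
    show (c • f) _ + (c • f) _ = _
    simp only [Pi.smul_apply, RingHom.id_apply, smul_eq_mul]
    ring

lemma derivOp_eq_shiftOp_add_one {n : ℕ} (i : Fin n) :
    derivOp (n := n) i = shiftOp i + 1 :=
  LinearMap.ext fun _ => rfl

lemma shiftOp_comm {n : ℕ} (i j : Fin n) : Commute (shiftOp i) (shiftOp (n := n) j) := by
  apply LinearMap.ext; intro f; funext x
  show f (x + Pi.single i 1 + Pi.single j 1) = f (x + Pi.single j 1 + Pi.single i 1)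
  rw [add_right_comm]

lemma derivOp_comm {n : ℕ} (i j : Fin n) : Commute (derivOp i) (derivOp (n := n) j) := by
  rw [derivOp_eq_shiftOp_add_one, derivOp_eq_shiftOp_add_one]
  exact ((shiftOp_comm i j).add_right (Commute.one_right _)).add_left
    ((Commute.one_left _).add_right (Commute.one_right _))

/-- `∂^b = ∏_{i ∈ b} ∂_i`. -/
def derivPow {n : ℕ} (b : Finset (Fin n)) : Module.End (ZMod 2) (V n) :=
  b.noncommProd derivOp (fun i _ j _ _ => derivOp_comm i j)

/-- `s^b = ∏_{i ∈ b} s_i`. -/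
def shiftPow {n : ℕ} (b : Finset (Fin n)) : Module.End (ZMod 2) (V n) :=
  b.noncommProd shiftOp (fun i _ j _ _ => shiftOp_comm i j)

/-- The operator of multiplication by a function `g`. -/
noncomputable def mulOp {n : ℕ} (g : V n) : Module.End (ZMod 2) (V n) :=
  LinearMap.mulLeft (ZMod 2) g

/-- `X_i`: multiplication by the `i`-th coordinate function. -/
noncomputable def XOp {n : ℕ} (i : Fin n) : Module.End (ZMod 2) (V n) :=
  mulOp (fun x => x i)

/-- Generator `x_i` of the Boole–Weyl algebra presentation. -/
noncomputable def xg (n : ℕ) (i : Fin n) : FreeAlgebra (ZMod 2) (Fin n ⊕ Fin n) :=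
  FreeAlgebra.ι (ZMod 2) (Sum.inl i)

/-- Generator `y_i` of the Boole–Weyl algebra presentation. -/
noncomputable def yg (n : ℕ) (i : Fin n) : FreeAlgebra (ZMod 2) (Fin n ⊕ Fin n) :=
  FreeAlgebra.ι (ZMod 2) (Sum.inr i)

/-- The defining relations of the Boole–Weyl algebra `BW_n`. -/
inductive BWRel (n : ℕ) :
    FreeAlgebra (ZMod 2) (Fin n ⊕ Fin n) → FreeAlgebra (ZMod 2) (Fin n ⊕ Fin n) → Prop
  | xsq (i : Fin n) : BWRel n (xg n i * xg n i) (xg n i)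
  | ysq (i : Fin n) : BWRel n (yg n i * yg n i) 0
  | yx (i : Fin n) : BWRel n (yg n i * xg n i) (xg n i * yg n i + yg n i + 1)
  | xx (i j : Fin n) : BWRel n (xg n i * xg n j) (xg n j * xg n i)
  | yy (i j : Fin n) : BWRel n (yg n i * yg n j) (yg n j * yg n i)
  | yxij (i j : Fin n) (h : i ≠ j) : BWRel n (yg n i * xg n j) (xg n j * yg n i)

section Translation

variable {G R : Type*} [CommRing R]

def translateOp [Add G] (c : G) : Module.End R (G → R) :=
  LinearMap.funLeft R R (· + c)

@[simp]
lemma translateOp_apply [Add G] (c : G) (f : G → R) (x : G) : translateOp c f x = f (x + c) := rfl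

lemma translateOp_zero [AddZeroClass G] : translateOp (R := R) (0 : G) = 1 :=
  LinearMap.ext fun f => funext fun x => by simp

lemma translateOp_add [AddSemigroup G] (c d : G) :
    translateOp (R := R) (c + d) = translateOp c * translateOp d :=
  LinearMap.ext fun f => funext fun x => by simp [add_assoc]

lemma eq_sum_mulLeft_mul_translateOp [AddCommGroup G] [Fintype G] [DecidableEq G]
    (F : Module.End R (G → R)) :
    F = ∑ c, LinearMap.mulLeft R (fun x => F (Pi.single (x + c) 1) x) * translateOp c := by
  refine LinearMap.ext fun f => funext fun x => ?_
  calc F f x = ∑ y, f y * F (Pi.single y 1) x := by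
        conv_lhs => rw [pi_eq_sum_univ' f]
        simp
    _ = ∑ c, f (x + c) * F (Pi.single (x + c) 1) x :=
        (Equiv.sum_comp (Equiv.addLeft x) fun y => f y * F (Pi.single y 1) x).symm
    _ = _ := by simp [mul_comm]

end Translation

open MvPolynomial in
lemma Algebra.adjoin_range_eval_eq_top (K σ : Type*) [Field K] [Fintype K] [Finite σ] :
    Algebra.adjoin K (Set.range fun (i : σ) (x : σ → K) => x i) = ⊤ := by
  rw [Algebra.adjoin_range_eq_range_aeval, AlgHom.range_eq_top]
  intro g
  obtain ⟨p, -, hp⟩ : g ∈ (restrictDegree σ K (Fintype.card K - 1)).map (evalₗ K σ) := by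
    rw [map_restrict_dom_evalₗ]; trivial
  refine ⟨p, funext fun x => ?_⟩
  simpa [← hp] using
    AlgHom.congr_fun (comp_aeval (fun i (y : σ → K) => y i) (Pi.evalAlgHom K (fun _ => K) x)) p

lemma Submodule.span_eq_top_of_one_mem_of_mul_mem {R A : Type*} [CommSemiring R] [Semiring A]
    [Algebra R A] {s t : Set A} (hs : Algebra.adjoin R s = ⊤) (h1 : 1 ∈ span R t)
    (hmul : ∀ a ∈ s, ∀ m ∈ t, a * m ∈ span R t) : span R t = ⊤ := by
  set M := span R t
  refine eq_top_iff'.mpr fun z => ?_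
  have hz : z ∈ Algebra.adjoin R s := hs ▸ Algebra.mem_top
  have key : ∀ m ∈ M, z * m ∈ M := by
    induction hz using Algebra.adjoin_induction with
    | mem a ha =>
      exact fun m hm => (span_le.mpr (hmul a ha) : M ≤ M.comap (LinearMap.mulLeft R a)) hm
    | algebraMap r =>
      intro m hm
      rw [Algebra.algebraMap_eq_smul_one, smul_mul_assoc, one_mul]
      exact M.smul_mem r hm
    | add x y _ _ hx hy => exact fun m hm => by rw [add_mul]; exact add_mem (hx m hm) (hy m hm)
    | mul x y _ _ hx hy => exact fun m hm => by rw [mul_assoc]; exact hx _ (hy m hm)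
  simpa using key 1 h1

lemma RingQuot.adjoin_image_mkAlgHom_eq_top {R A : Type*} [CommSemiring R] [Semiring A]
    [Algebra R A] (r : A → A → Prop) {s : Set A} (hs : Algebra.adjoin R s = ⊤) :
    Algebra.adjoin R (RingQuot.mkAlgHom R r '' s) = ⊤ := by
  rw [Algebra.adjoin_image, hs, Algebra.map_top, AlgHom.range_eq_top]
  exact RingQuot.mkAlgHom_surjective R r

lemma LinearMap.bijective_of_surjective_of_finrank_le {K V W : Type*} [DivisionRing K]
    [AddCommGroup V] [Module K V] [AddCommGroup W] [Module K W] [FiniteDimensional K V]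
    [FiniteDimensional K W] {f : V →ₗ[K] W} (hf : Function.Surjective f)
    (hdim : Module.finrank K V ≤ Module.finrank K W) : Function.Bijective f :=
  ⟨(injective_iff_surjective_of_finrank_eq_finrank
    (hdim.antisymm (finrank_le_finrank_of_surjective hf))).mpr hf, hf⟩

section NoncommProd

variable {ι M : Type*} [DecidableEq ι] {u : ι → M}

lemma Finset.mul_noncommProd_of_mul_self [Monoid M] (hu : Pairwise fun i j => Commute (u i) (u j))
    {i : ι} (h : u i * u i = u i) (s : Finset ι) :
    u i * s.noncommProd u (hu.set_pairwise _) = (insert i s).noncommProd u (hu.set_pairwise _) := by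
  by_cases hi : i ∈ s
  · rw [insert_eq_of_mem hi, ← mul_noncommProd_erase s hi u, ← mul_assoc, h]
  · exact (noncommProd_insert_of_notMem _ _ _ _ hi).symm

lemma Finset.mul_noncommProd_eq_zero [MonoidWithZero M]
    (hu : Pairwise fun i j => Commute (u i) (u j)) {i : ι} (h : u i * u i = 0) {s : Finset ι}
    (hi : i ∈ s) : u i * s.noncommProd u (hu.set_pairwise _) = 0 := by
  rw [← mul_noncommProd_erase s hi u, ← mul_assoc, h, zero_mul]

end NoncommProd

section Operators

variable {n : ℕ}

@[simp]
lemma XOp_apply (i : Fin n) (f : V n) (x : Fin n → ZMod 2) : XOp i f x = x i * f x := rfl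

@[simp]
lemma derivOp_apply (i : Fin n) (f : V n) (x : Fin n → ZMod 2) :
    derivOp i f x = f (x + Pi.single i 1) + f x := rfl

lemma XOp_mul_self (i : Fin n) : XOp i * XOp i = XOp i :=
  LinearMap.ext fun f => funext fun x => by
    simp only [Module.End.mul_apply, XOp_apply]
    rw [← mul_assoc, ← sq, ZMod.pow_card]

lemma XOp_commute (i j : Fin n) : Commute (XOp i) (XOp j) :=
  LinearMap.ext fun f => funext fun x => by simp [mul_left_comm]

lemma derivOp_mul_self (i : Fin n) : derivOp i * derivOp i = 0 :=
  LinearMap.ext fun f => funext fun x => by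
    have h : (1 : ZMod 2) + 1 = 0 := rfl
    simp only [Module.End.mul_apply, derivOp_apply, add_assoc, ← Pi.single_add, h, Pi.single_zero,
      add_zero, LinearMap.zero_apply, Pi.zero_apply]
    ring_nf
    reduce_mod_char

lemma derivOp_mul_XOp_self (i : Fin n) :
    derivOp i * XOp i = XOp i * derivOp i + derivOp i + 1 :=
  LinearMap.ext fun f => funext fun x => by
    simp only [Module.End.mul_apply, LinearMap.add_apply, XOp_apply, derivOp_apply,
      Module.End.one_apply, Pi.add_apply, Pi.single_eq_same]
    ring_nf
    reduce_mod_char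

lemma derivOp_mul_XOp_of_ne {i j : Fin n} (h : i ≠ j) :
    derivOp i * XOp j = XOp j * derivOp i :=
  LinearMap.ext fun f => funext fun x => by simp [h.symm, mul_add]

end Operators

section Representation

variable (n : ℕ)

noncomputable def bwHom : RingQuot (BWRel n) →ₐ[ZMod 2] Module.End (ZMod 2) (V n) :=
  RingQuot.liftAlgHom (ZMod 2) ⟨FreeAlgebra.lift (ZMod 2) (Sum.elim XOp derivOp), by
    rintro _ _ (i | i | i | ⟨i, j⟩ | ⟨i, j⟩ | ⟨i, j, hij⟩) <;>
      simp only [xg, yg, map_mul, map_add, map_one, map_zero, FreeAlgebra.lift_ι_apply,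
        Sum.elim_inl, Sum.elim_inr]
    exacts [XOp_mul_self i, derivOp_mul_self i, derivOp_mul_XOp_self i, XOp_commute i j,
      derivOp_comm i j, derivOp_mul_XOp_of_ne hij]⟩

variable {n}

lemma bwHom_x (i : Fin n) : bwHom n (RingQuot.mkAlgHom (ZMod 2) (BWRel n) (xg n i)) = XOp i := by
  simp [bwHom, xg]

lemma bwHom_y (i : Fin n) :
    bwHom n (RingQuot.mkAlgHom (ZMod 2) (BWRel n) (yg n i)) = derivOp i := by
  simp [bwHom, yg]

lemma shiftOp_eq_translateOp (i : Fin n) : shiftOp i = translateOp (Pi.single i 1) := rfl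

lemma mulOp_mem_range_bwHom (g : V n) : mulOp g ∈ (bwHom n).range := by
  have h : Algebra.adjoin (ZMod 2) (Set.range fun (i : Fin n) (x : Fin n → ZMod 2) => x i) ≤
      (bwHom n).range.comap (Algebra.lmul (ZMod 2) (V n)) :=
    Algebra.adjoin_le <| Set.range_subset_iff.mpr fun i => ⟨_, bwHom_x i⟩
  rw [Algebra.adjoin_range_eval_eq_top] at h
  exact h Algebra.mem_top

lemma translateOp_mem_range_bwHom (c : Fin n → ZMod 2) : translateOp c ∈ (bwHom n).range := by
  let S : AddSubmonoid (Fin n → ZMod 2) :=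
    { carrier := {c | translateOp c ∈ (bwHom n).range}
      add_mem' := fun hc hd => by rw [Set.mem_ofPred_eq, translateOp_add]; exact mul_mem hc hd
      zero_mem' := by rw [Set.mem_ofPred_eq, translateOp_zero]; exact one_mem _ }
  have hsingle (i : Fin n) : translateOp (Pi.single i (1 : ZMod 2)) ∈ (bwHom n).range := by
    rw [← shiftOp_eq_translateOp, eq_sub_of_add_eq (derivOp_eq_shiftOp_add_one i).symm]
    exact sub_mem ⟨_, bwHom_y i⟩ (one_mem _)
  rw [← Finset.univ_sum_single c]
  refine S.sum_mem fun i _ => ?_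
  obtain h | h : c i = 0 ∨ c i = 1 := by generalize c i = z; decide +revert
  · simpa only [h, Pi.single_zero] using S.zero_mem
  · rw [h]; exact hsingle i

lemma bwHom_surjective : Function.Surjective (bwHom n) := by
  intro F
  rw [eq_sum_mulLeft_mul_translateOp F]
  exact Subalgebra.sum_mem _ fun c _ =>
    mul_mem (mulOp_mem_range_bwHom _) (translateOp_mem_range_bwHom c)

end Representation

section Monomials

variable {n : ℕ}

noncomputable abbrev bwX (i : Fin n) : RingQuot (BWRel n) :=
  RingQuot.mkAlgHom (ZMod 2) (BWRel n) (xg n i)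

noncomputable abbrev bwY (i : Fin n) : RingQuot (BWRel n) :=
  RingQuot.mkAlgHom (ZMod 2) (BWRel n) (yg n i)

lemma bwX_mul_self (i : Fin n) : bwX i * bwX i = bwX i := by
  simpa only [map_mul] using RingQuot.mkAlgHom_rel (ZMod 2) (BWRel.xsq i)

lemma bwY_mul_self (i : Fin n) : bwY i * bwY i = 0 := by
  simpa only [map_mul, map_zero] using RingQuot.mkAlgHom_rel (ZMod 2) (BWRel.ysq i)

lemma bwY_mul_bwX_self (i : Fin n) : bwY i * bwX i = bwX i * bwY i + bwY i + 1 := by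
  simpa only [map_mul, map_add, map_one] using RingQuot.mkAlgHom_rel (ZMod 2) (BWRel.yx i)

lemma pairwise_commute_bwX : Pairwise fun i j : Fin n => Commute (bwX i) (bwX j) :=
  fun i j _ => (commute_iff_eq _ _).mpr <| by
    simpa only [map_mul] using RingQuot.mkAlgHom_rel (ZMod 2) (BWRel.xx i j)

lemma pairwise_commute_bwY : Pairwise fun i j : Fin n => Commute (bwY i) (bwY j) :=
  fun i j _ => (commute_iff_eq _ _).mpr <| by
    simpa only [map_mul] using RingQuot.mkAlgHom_rel (ZMod 2) (BWRel.yy i j)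

lemma bwY_mul_bwX_of_ne {i j : Fin n} (h : i ≠ j) : bwY i * bwX j = bwX j * bwY i := by
  simpa only [map_mul] using RingQuot.mkAlgHom_rel (ZMod 2) (BWRel.yxij i j h)

noncomputable def bwXMon (a : Finset (Fin n)) : RingQuot (BWRel n) :=
  a.noncommProd bwX (pairwise_commute_bwX.set_pairwise _)

noncomputable def bwYMon (b : Finset (Fin n)) : RingQuot (BWRel n) :=
  b.noncommProd bwY (pairwise_commute_bwY.set_pairwise _)

noncomputable def bwMon (p : Finset (Fin n) × Finset (Fin n)) : RingQuot (BWRel n) :=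
  bwXMon p.1 * bwYMon p.2

lemma bwXMon_insert {i : Fin n} {a : Finset (Fin n)} (h : i ∉ a) :
    bwXMon (insert i a) = bwX i * bwXMon a :=
  Finset.noncommProd_insert_of_notMem _ _ _ _ h

lemma bwYMon_insert {i : Fin n} {b : Finset (Fin n)} (h : i ∉ b) :
    bwYMon (insert i b) = bwY i * bwYMon b :=
  Finset.noncommProd_insert_of_notMem _ _ _ _ h

lemma bwY_mul_bwXMon_of_notMem {i : Fin n} {a : Finset (Fin n)} (h : i ∉ a) :
    bwY i * bwXMon a = bwXMon a * bwY i :=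
  (Finset.noncommProd_commute _ _ _ _ fun _ hj =>
    (commute_iff_eq _ _).mpr (bwY_mul_bwX_of_ne (ne_of_mem_of_not_mem hj h).symm)).eq

lemma bwY_mul_bwXMon_insert {i : Fin n} {a : Finset (Fin n)} (h : i ∉ a) :
    bwY i * bwXMon (insert i a) = bwXMon (insert i a) * bwY i + bwXMon a * bwY i + bwXMon a := by
  rw [bwXMon_insert h, ← mul_assoc, bwY_mul_bwX_self, add_mul, add_mul, one_mul, mul_assoc,
    bwY_mul_bwXMon_of_notMem h, ← mul_assoc]

lemma bwMon_mem_span (p : Finset (Fin n) × Finset (Fin n)) :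
    bwMon p ∈ Submodule.span (ZMod 2) (Set.range bwMon) :=
  Submodule.subset_span ⟨p, rfl⟩

lemma bwXMon_mul_bwY_mul_bwYMon_mem_span (a b : Finset (Fin n)) (i : Fin n) :
    bwXMon a * (bwY i * bwYMon b) ∈ Submodule.span (ZMod 2) (Set.range bwMon) := by
  by_cases hi : i ∈ b
  · rw [bwYMon, Finset.mul_noncommProd_eq_zero pairwise_commute_bwY (bwY_mul_self i) hi, mul_zero]
    exact zero_mem _
  · rw [← bwYMon_insert hi]
    exact bwMon_mem_span (a, insert i b)

lemma bwX_mul_bwMon_mem_span (i : Fin n) (p : Finset (Fin n) × Finset (Fin n)) :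
    bwX i * bwMon p ∈ Submodule.span (ZMod 2) (Set.range bwMon) := by
  rw [bwMon, ← mul_assoc, bwXMon,
    Finset.mul_noncommProd_of_mul_self pairwise_commute_bwX (bwX_mul_self i)]
  exact bwMon_mem_span (insert i p.1, p.2)

lemma bwY_mul_bwMon_mem_span (i : Fin n) (p : Finset (Fin n) × Finset (Fin n)) :
    bwY i * bwMon p ∈ Submodule.span (ZMod 2) (Set.range bwMon) := by
  obtain ⟨a, b⟩ := p
  by_cases hi : i ∈ a
  · obtain ⟨e, he, rfl⟩ : ∃ e, i ∉ e ∧ insert i e = a :=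
      ⟨a.erase i, Finset.notMem_erase i a, Finset.insert_erase hi⟩
    rw [bwMon, ← mul_assoc, bwY_mul_bwXMon_insert he, add_mul, add_mul, mul_assoc, mul_assoc]
    exact add_mem (add_mem (bwXMon_mul_bwY_mul_bwYMon_mem_span _ _ _)
      (bwXMon_mul_bwY_mul_bwYMon_mem_span _ _ _)) (bwMon_mem_span (e, b))
  · rw [bwMon, ← mul_assoc, bwY_mul_bwXMon_of_notMem hi, mul_assoc]
    exact bwXMon_mul_bwY_mul_bwYMon_mem_span _ _ _

lemma span_range_bwMon_eq_top : Submodule.span (ZMod 2) (Set.range (bwMon (n := n))) = ⊤ := by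
  refine Submodule.span_eq_top_of_one_mem_of_mul_mem
    (RingQuot.adjoin_image_mkAlgHom_eq_top _ (FreeAlgebra.adjoin_range_ι (ZMod 2) _)) ?_ ?_
  · simpa [bwMon, bwXMon, bwYMon] using bwMon_mem_span (∅, ∅)
  · rintro _ ⟨_, ⟨i | i, rfl⟩, rfl⟩ _ ⟨p, rfl⟩
    exacts [bwX_mul_bwMon_mem_span i p, bwY_mul_bwMon_mem_span i p]

end Monomials

section Dimension

variable (n : ℕ)

instance : Module.Finite (ZMod 2) (RingQuot (BWRel n)) :=
  ⟨span_range_bwMon_eq_top ▸ Submodule.fg_span (Set.finite_range _)⟩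

lemma finrank_bw_le : Module.finrank (ZMod 2) (RingQuot (BWRel n)) ≤ 2 ^ n * 2 ^ n :=
  calc Module.finrank (ZMod 2) (RingQuot (BWRel n))
      = (Set.range (bwMon (n := n))).finrank (ZMod 2) := by
        rw [Set.finrank, span_range_bwMon_eq_top, finrank_top]
    _ ≤ Fintype.card (Finset (Fin n) × Finset (Fin n)) := finrank_range_le_card _
    _ = 2 ^ n * 2 ^ n := by simp [Fintype.card_finset]

lemma finrank_end_V : Module.finrank (ZMod 2) (Module.End (ZMod 2) (V n)) = 2 ^ n * 2 ^ n := by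
  rw [Module.finrank_linearMap, Module.finrank_fintype_fun_eq_card]
  simp

lemma bwHom_bijective : Function.Bijective (bwHom n) :=
  LinearMap.bijective_of_surjective_of_finrank_le (f := (bwHom n).toLinearMap) bwHom_surjective
    ((finrank_bw_le n).trans (finrank_end_V n).ge)

end Dimension

/-- The Boole–Weyl algebra `BW_n = Z_2⟨x_i, y_i⟩/(relations)` is isomorphic as a
`Z_2`-algebra to `End_{Z_2}(M(Z_2^n, Z_2))`, sending `x_i` to multiplication by
the `i`-th coordinate and `y_i` to the Boolean derivative `∂_i`. -/
theorem boole_weyl_iso_end (n : ℕ) :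
    ∃ e : RingQuot (BWRel n) ≃ₐ[ZMod 2] Module.End (ZMod 2) (V n),
      (∀ i, e (RingQuot.mkAlgHom (ZMod 2) (BWRel n) (xg n i)) = XOp i) ∧
      (∀ i, e (RingQuot.mkAlgHom (ZMod 2) (BWRel n) (yg n i)) = derivOp i) :=
  ⟨AlgEquiv.ofBijective (bwHom n) (bwHom_bijective n), bwHom_x, bwHom_y⟩
end

section
/- In the algebra of operators on functions Z_2^n → Z_2, the commutation relation y^b m^c = Σ_{b_1 ⊆ b_2 ⊆ b} m^{c + b_2} y^{b_1} holds, where y^b = ∏_{i∈b} ∂_i and m^c is multiplication by the indicator of the point c, and c + b_2 is symmetric difference. -/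
open Finset

/-! Since `∂_i = s_i + 1` and, in characteristic 2, also `s_i = ∂_i + 1`, expanding the commuting
products gives `∂^b = ∑_{b₂ ⊆ b} s^{b₂}` and `s^{b₂} = ∑_{b₁ ⊆ b₂} ∂^{b₁}`. As `s^{b₂}` is translation
by the point `b₂`, it moves the point mass: `s^{b₂} m^c = m^{c + b₂} s^{b₂}`. Substituting the first
expansion, commuting, and substituting the second gives the identity. -/

theorem Finset.noncommProd_add_one_eq_sum_powerset {ι R : Type*} [DecidableEq ι] [Semiring R]
    {f g : ι → R} (hf : ∀ i j, Commute (f i) (f j)) (hg : ∀ i j, Commute (g i) (g j))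
    (hfg : ∀ i, g i = f i + 1) (s : Finset ι) :
    s.noncommProd g (Set.pairwise_of_forall _ _ hg) =
      ∑ t ∈ s.powerset, t.noncommProd f (Set.pairwise_of_forall _ _ hf) := by
  induction s using Finset.induction_on with
  | empty => simp
  | @insert a s ha ih =>
    rw [noncommProd_insert_of_notMem _ _ _ _ ha, ih, sum_powerset_insert ha, hfg, add_mul, one_mul,
      mul_sum, add_comm]
    congr 1
    refine sum_congr rfl fun t ht => (noncommProd_insert_of_notMem _ _ _ _ ?_).symm
    exact fun hat => ha (mem_powerset.mp ht hat)

lemma shiftOp_eq_derivOp_add_one {n : ℕ} (i : Fin n) : shiftOp (n := n) i = derivOp i + 1 := by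
  rw [derivOp_eq_shiftOp_add_one, add_assoc, ZModModule.add_self, add_zero]

lemma derivPow_eq_sum_shiftPow {n : ℕ} (b : Finset (Fin n)) :
    derivPow b = ∑ t ∈ b.powerset, shiftPow t :=
  noncommProd_add_one_eq_sum_powerset shiftOp_comm derivOp_comm derivOp_eq_shiftOp_add_one b

lemma shiftPow_eq_sum_derivPow {n : ℕ} (b : Finset (Fin n)) :
    shiftPow b = ∑ t ∈ b.powerset, derivPow t :=
  noncommProd_add_one_eq_sum_powerset derivOp_comm shiftOp_comm shiftOp_eq_derivOp_add_one b

lemma ind_symmDiff {n : ℕ} (a b : Finset (Fin n)) : ind (symmDiff a b) = ind a + ind b := by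
  funext j
  by_cases ha : j ∈ a <;> by_cases hb : j ∈ b <;>
    simp [ind, mem_symmDiff, ha, hb, ZModModule.add_self]

lemma ind_empty {n : ℕ} : ind (∅ : Finset (Fin n)) = 0 := by
  funext j
  simp [ind]

lemma ind_insert {n : ℕ} {i : Fin n} {s : Finset (Fin n)} (hi : i ∉ s) :
    ind (insert i s) = Pi.single i 1 + ind s := by
  funext j
  by_cases hj : j = i
  · subst hj; simp [ind, hi]
  · simp [ind, hj]

lemma shiftPow_insert {n : ℕ} {i : Fin n} {s : Finset (Fin n)} (hi : i ∉ s) :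
    shiftPow (insert i s) = shiftOp i * shiftPow s :=
  noncommProd_insert_of_notMem s i shiftOp _ hi

lemma shiftPow_apply {n : ℕ} (b : Finset (Fin n)) (f : V n) (x : Fin n → ZMod 2) :
    shiftPow b f x = f (x + ind b) := by
  induction b using Finset.induction_on generalizing x with
  | empty => rw [ind_empty, add_zero]; rfl
  | @insert i s hi ih =>
    rw [shiftPow_insert hi, ind_insert hi, ← add_assoc]
    exact ih _

lemma mFun_apply_add_ind {n : ℕ} (a b : Finset (Fin n)) (x : Fin n → ZMod 2) :
    mFun a (x + ind b) = mFun (symmDiff a b) x := by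
  simp only [mFun, ind_symmDiff, ← eq_sub_iff_add_eq, ZModModule.sub_eq_add]

lemma shiftPow_mul_mulOp_mFun {n : ℕ} (b c : Finset (Fin n)) :
    shiftPow b * mulOp (mFun c) = mulOp (mFun (symmDiff c b)) * shiftPow b := by
  refine LinearMap.ext fun f => funext fun x => ?_
  change shiftPow b (mFun c * f) x = mFun (symmDiff c b) x * shiftPow b f x
  rw [shiftPow_apply, shiftPow_apply, Pi.mul_apply, mFun_apply_add_ind]

/-- `y^b m^c = Σ_{b₁ ⊆ b₂ ⊆ b} m^{c + b₂} y^{b₁}` (symmetric difference `+`). -/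
theorem derivPow_mul_mOp (n : ℕ) (b c : Finset (Fin n)) :
    derivPow b * mulOp (mFun c) =
      ∑ b2 ∈ b.powerset, ∑ b1 ∈ b2.powerset,
        mulOp (mFun (symmDiff c b2)) * derivPow b1 := by
  calc derivPow b * mulOp (mFun c)
      = ∑ b2 ∈ b.powerset, shiftPow b2 * mulOp (mFun c) := by
        rw [derivPow_eq_sum_shiftPow, sum_mul]
    _ = ∑ b2 ∈ b.powerset, mulOp (mFun (symmDiff c b2)) * shiftPow b2 :=
        sum_congr rfl fun b2 _ => shiftPow_mul_mulOp_mFun b2 c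
    _ = _ := by simp_rw [shiftPow_eq_sum_derivPow, mul_sum]
end
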